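/- arXiv:0906.4509 — 2 statements merged into one kernel-verified Lean document; each statement's English description precedes it below -/
import Mathlib

section
/- The incidence structure ([V], 𝒜' ∪ ℬ') is a 2-(v, k, λ) design with v = (q^{2e+1} − 1)/(q − 1), k = (q^{e+1} − 1)/(q − 1), and λ = (q^{2e−1} − 1)(q^{2e−2} − 1)⋯(q^{e+1} − 1)/((q^{e−1} − 1)(q^{e−2} − 1)⋯(q − 1)); that is, every block has exactly k points and every pair of distinct points of [V] is contained in exactly λ blocks. -/
/-- The set of projective points (1-dimensional subspaces) contained in a subset `S` of `V`. -/
def projPts (K : Type*) {V : Type*} [Field K] [AddCommGroup V] [Module K V]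
    (S : Set V) : Set (Submodule K V) :=
  {P | Module.finrank K P = 1 ∧ (P : Set V) ⊆ S}

/-- `𝒜`: the (e+1)-dimensional subspaces of `V` not contained in `H`. -/
def setA {K V : Type*} [Field K] [AddCommGroup V] [Module K V]
    (e : ℕ) (H : Submodule K V) : Set (Submodule K V) :=
  {W | Module.finrank K W = e + 1 ∧ ¬ W ≤ H}

/-- `ℬ`: the (e-1)-dimensional subspaces of `H`. -/
def setB {K V : Type*} [Field K] [AddCommGroup V] [Module K V]
    (e : ℕ) (H : Submodule K V) : Set (Submodule K V) :=
  {W | Module.finrank K W = e - 1 ∧ W ≤ H}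

/-- The block `[σ(W ∩ H) ∪ (W \ H)]` associated to `W ∈ 𝒜`. -/
def blockA {K V : Type*} [Field K] [AddCommGroup V] [Module K V]
    (σ : Submodule K V → Submodule K V) (H W : Submodule K V) : Set (Submodule K V) :=
  projPts K ((σ (W ⊓ H) : Set V) ∪ ((W : Set V) \ (H : Set V)))

/-- The block `[σ(W)]` associated to `W ∈ ℬ`. -/
def blockB {K V : Type*} [Field K] [AddCommGroup V] [Module K V]
    (σ : Submodule K V → Submodule K V) (W : Submodule K V) : Set (Submodule K V) :=
  projPts K (σ W : Set V)

/-- The block set `𝒜' ∪ ℬ'` of the Jungnickel–Tonchev design. -/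
def blocksJT {K V : Type*} [Field K] [AddCommGroup V] [Module K V]
    (e : ℕ) (σ : Submodule K V → Submodule K V) (H : Submodule K V) :
    Set (Set (Submodule K V)) :=
  (blockA σ H '' setA e H) ∪
    {B | ∃ W : Submodule K V, Module.finrank K W = e + 1 ∧ W ≤ H ∧ B = projPts K (W : Set V)}

/-!
Points and subspaces are counted with the Gaussian binomials `[n, k]_q`, the numbers of
`k`-subspaces of an `n`-space. A block of `𝒜'` consists of the `[e]_q` points of `σ(W ∩ H)` and
the `q^e` points of `W` off `H`; a block of `ℬ'` is the point set of an `(e+1)`-space. Either way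
it has `[e+1]_q` points.

For two points `P₁ ≠ P₂`, put `L = P₁ + P₂`. As `σ` is an inclusion-reversing involution, a
point `P ≤ H` lies in `σ(W ∩ H)` iff `W ∩ H ≤ σ(P)`.
* Neither point in `H`: the blocks through both come from the `(e+1)`-spaces `W ⊇ L`, and there
  are `[2e-1, e-1]_q` of them.
* `P₁ ≤ H`, `P₂ ⊄ H`: `W ↦ W ∩ H` is a bijection onto the `e`-subspaces of `σ(P₁)`, with
  inverse `M ↦ M + P₂`, giving `[2e-1, e]_q` blocks.
* Both in `H`: `ℬ'` contributes the `[2e-2, e-1]_q` spaces of dimension `e+1` between `L`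
  and `H`, and `𝒜'` the spaces `W ⊄ H` with `W ∩ H ≤ σ(L)`: `q^e` of them over each of the
  `[2e-2, e]_q` `e`-subspaces of `σ(L)`.

The q-Pascal rule and the symmetry `[n, k]_q = [n, n-k]_q` turn all three counts into
`[2e-1, e-1]_q`, which is `λ`.
-/

open Module

section QBinom

open Finset

/-- `(q - 1)ⁿ [n]_q!`; the Gaussian binomials are quotients of these. -/
def qFact (q n : ℕ) : ℕ := ∏ i ∈ Icc 1 n, (q ^ i - 1)

def qBinom (q : ℕ) : ℕ → ℕ → ℕ
  | _, 0 => 1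
  | 0, _ + 1 => 0
  | n + 1, k + 1 => qBinom q n k + q ^ (k + 1) * qBinom q n (k + 1)

variable {q : ℕ}

@[simp] theorem qFact_zero : qFact q 0 = 1 := rfl

theorem qFact_succ (n : ℕ) : qFact q (n + 1) = qFact q n * (q ^ (n + 1) - 1) :=
  prod_Icc_succ_top (by omega) _

theorem qFact_pos (hq : 2 ≤ q) (n : ℕ) : 0 < qFact q n :=
  prod_pos fun i hi => Nat.sub_pos_of_lt <|
    Nat.one_lt_pow (by simp at hi; omega) (by omega)

theorem qFact_mul_prod_Icc {m n : ℕ} (h : m ≤ n) :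
    qFact q m * ∏ i ∈ Icc (m + 1) n, (q ^ i - 1) = qFact q n := by
  induction n, h using Nat.le_induction with
  | base => simp
  | succ n hmn ih => rw [prod_Icc_succ_top (by omega), ← mul_assoc, ih, qFact_succ]

theorem pow_sub_one_add_pow_mul_pow_sub_one (hq : 1 ≤ q) (a b : ℕ) :
    (q ^ a - 1) + q ^ a * (q ^ b - 1) = q ^ (a + b) - 1 := by
  have h1 : 1 ≤ q ^ a := Nat.one_le_pow _ _ hq
  have h2 : q ^ a ≤ q ^ (a + b) := Nat.pow_le_pow_right hq (by omega)
  rw [Nat.mul_sub, mul_one, ← pow_add]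
  omega

@[simp] theorem qBinom_zero_right (n : ℕ) : qBinom q n 0 = 1 := by cases n <;> rfl

theorem qBinom_succ_succ (n k : ℕ) :
    qBinom q (n + 1) (k + 1) = qBinom q n k + q ^ (k + 1) * qBinom q n (k + 1) := rfl

theorem qBinom_eq_zero_of_lt {n k : ℕ} (h : n < k) : qBinom q n k = 0 := by
  induction n generalizing k with
  | zero => obtain ⟨k, rfl⟩ := Nat.exists_eq_succ_of_ne_zero (by omega : k ≠ 0); rfl
  | succ n ih =>
    obtain ⟨k, rfl⟩ := Nat.exists_eq_succ_of_ne_zero (by omega : k ≠ 0)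
    rw [qBinom_succ_succ, ih (by omega), ih (by omega)]
    simp

theorem qBinom_mul_qFact_mul_qFact (hq : 1 ≤ q) {n k : ℕ} (hk : k ≤ n) :
    qBinom q n k * qFact q k * qFact q (n - k) = qFact q n := by
  induction n generalizing k with
  | zero =>
    obtain rfl : k = 0 := by omega
    simp
  | succ n ih =>
    cases k with
    | zero => simp
    | succ k =>
      have hleft : qBinom q n k * qFact q (k + 1) * qFact q (n - k)
          = qFact q n * (q ^ (k + 1) - 1) := by
        rw [qFact_succ, ← ih (k := k) (by omega)]
        ring
      have hright : qBinom q n (k + 1) * qFact q (k + 1) * qFact q (n - k)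
          = qFact q n * (q ^ (n - k) - 1) := by
        rcases Nat.lt_or_ge k n with hkn | hkn
        · rw [show n - k = n - (k + 1) + 1 by omega, qFact_succ (n - (k + 1)),
            ← ih (k := k + 1) hkn]
          ring
        · rw [qBinom_eq_zero_of_lt (by omega), show n - k = 0 by omega]
          simp
      calc qBinom q (n + 1) (k + 1) * qFact q (k + 1) * qFact q (n + 1 - (k + 1))
          = qBinom q n k * qFact q (k + 1) * qFact q (n - k)
            + q ^ (k + 1) * (qBinom q n (k + 1) * qFact q (k + 1) * qFact q (n - k)) := by
            rw [qBinom_succ_succ, Nat.add_sub_add_right]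
            ring
        _ = qFact q n * ((q ^ (k + 1) - 1) + q ^ (k + 1) * (q ^ (n - k) - 1)) := by
            rw [hleft, hright]
            ring
        _ = qFact q (n + 1) := by
            rw [pow_sub_one_add_pow_mul_pow_sub_one hq, show k + 1 + (n - k) = n + 1 by omega,
              qFact_succ]

theorem qBinom_symm (hq : 2 ≤ q) {n k : ℕ} (hk : k ≤ n) : qBinom q n (n - k) = qBinom q n k := by
  have h := qBinom_mul_qFact_mul_qFact (q := q) (by omega) (Nat.sub_le n k)
  rw [Nat.sub_sub_self hk, ← qBinom_mul_qFact_mul_qFact (by omega) hk, mul_right_comm,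
    mul_assoc, mul_assoc] at h
  exact Nat.eq_of_mul_eq_mul_right (Nat.mul_pos (qFact_pos hq _) (qFact_pos hq _)) h

theorem qBinom_succ_one (n : ℕ) : qBinom q (n + 1) 1 = qBinom q n 1 + q ^ n := by
  induction n with
  | zero => rfl
  | succ n ih =>
    have hunfold : ∀ m, qBinom q (m + 1) 1 = 1 + q * qBinom q m 1 := fun m => by
      simp [qBinom_succ_succ]
    calc qBinom q (n + 1 + 1) 1 = 1 + q * qBinom q (n + 1) 1 := hunfold _
      _ = (1 + q * qBinom q n 1) + q ^ (n + 1) := by rw [ih]; ring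
      _ = qBinom q (n + 1) 1 + q ^ (n + 1) := by rw [hunfold n]

theorem qBinom_one_mul (hq : 1 ≤ q) (n : ℕ) : qBinom q n 1 * (q - 1) = q ^ n - 1 := by
  induction n with
  | zero => simp [qBinom_eq_zero_of_lt]
  | succ n ih =>
    rw [qBinom_succ_one, add_mul, ih, ← pow_sub_one_add_pow_mul_pow_sub_one hq n 1, pow_one]

theorem qBinom_one (hq : 2 ≤ q) (n : ℕ) : qBinom q n 1 = (q ^ n - 1) / (q - 1) :=
  (Nat.div_eq_of_eq_mul_left (by omega) (qBinom_one_mul (by omega) n).symm).symm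

theorem qBinom_eq_prod_div (hq : 2 ≤ q) {n k : ℕ} (hk : k ≤ n) :
    qBinom q n k = (∏ i ∈ Icc (n - k + 1) n, (q ^ i - 1)) / qFact q k := by
  refine (Nat.div_eq_of_eq_mul_left (qFact_pos hq k) ?_).symm
  apply Nat.eq_of_mul_eq_mul_left (qFact_pos hq (n - k))
  rw [qFact_mul_prod_Icc (by omega), ← qBinom_mul_qFact_mul_qFact (by omega) hk]
  ring

theorem prod_pow_sub_pow_mul_qFact {n k : ℕ} (hk : k ≤ n) :
    (∏ i ∈ range k, (q ^ n - q ^ i)) * qFact q (n - k) = q ^ (∑ i ∈ range k, i) * qFact q n := by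
  induction k with
  | zero => simp
  | succ k ih =>
    have hsplit : q ^ n - q ^ k = q ^ k * (q ^ (n - (k + 1) + 1) - 1) := by
      rw [Nat.mul_sub, mul_one, ← pow_add, show k + (n - (k + 1) + 1) = n by omega]
    have hfact : qFact q (n - k) = qFact q (n - (k + 1)) * (q ^ (n - (k + 1) + 1) - 1) := by
      rw [← qFact_succ, show n - (k + 1) + 1 = n - k by omega]
    calc (∏ i ∈ range (k + 1), (q ^ n - q ^ i)) * qFact q (n - (k + 1))
        = q ^ k * ((∏ i ∈ range k, (q ^ n - q ^ i)) * qFact q (n - k)) := by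
          rw [prod_range_succ, hsplit, hfact]
          ring
      _ = q ^ (∑ i ∈ range (k + 1), i) * qFact q n := by
          rw [ih (by omega), sum_range_succ, pow_add]
          ring

end QBinom

theorem Set.ncard_eq_ncard_mul_of_fibers {α β : Type*} [Finite α] [Finite β] {f : α → β}
    {S : Set α} {T : Set β} {c : ℕ} (hmaps : Set.MapsTo f S T)
    (hfib : ∀ b ∈ T, {a ∈ S | f a = b}.ncard = c) :
    S.ncard = T.ncard * c := by
  classical
  have := Fintype.ofFinite α
  have := Fintype.ofFinite β
  rw [Set.ncard_eq_toFinset_card' S, Set.ncard_eq_toFinset_card' T,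
    Finset.card_eq_sum_card_fiberwise (f := f) (t := T.toFinset) (by simpa using hmaps),
    Finset.sum_const_nat fun b hb => ?_]
  rw [← hfib b (by simpa using hb), Set.ncard_eq_toFinset_card']
  congr 1
  ext
  simp

section LinearAlgebra

variable {K V : Type*} [Field K] [AddCommGroup V] [Module K V]

namespace Submodule

theorem finrank_comap_mkQ [FiniteDimensional K V] (L : Submodule K V)
    (U : Submodule K (V ⧸ L)) :
    finrank K (U.comap L.mkQ) = finrank K U + finrank K L := by
  have h := LinearMap.finrank_range_add_finrank_ker (L.mkQ.domRestrict (U.comap L.mkQ))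
  rwa [LinearMap.range_domRestrict, map_comap_eq_of_surjective L.mkQ_surjective,
    LinearMap.ker_domRestrict, ker_mkQ,
    LinearEquiv.finrank_eq (comapSubtypeEquivOfLe (L.le_comap_mkQ U)), eq_comm] at h

theorem le_iff_mem_of_finrank_eq_one {P U : Submodule K V} (hP : finrank K P = 1) {x : V}
    (hxP : x ∈ P) (hx : x ≠ 0) : P ≤ U ↔ x ∈ U := by
  have : FiniteDimensional K P := Module.finite_of_finrank_pos (by omega)
  have hPx : span K {x} = P := eq_of_le_of_finrank_eq ((span_singleton_le_iff_mem x P).2 hxP)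
    (by rw [finrank_span_singleton hx, hP])
  rw [← hPx, span_singleton_le_iff_mem]

theorem coe_subset_union_sdiff_iff {P S W H : Submodule K V} (hP : finrank K P = 1) :
    (P : Set V) ⊆ (S : Set V) ∪ ((W : Set V) \ H) ↔ P ≤ S ∨ (P ≤ W ∧ ¬ P ≤ H) := by
  constructor
  · intro hsub
    obtain ⟨x, hxP, hx⟩ := P.exists_mem_ne_zero_of_ne_bot (by rintro rfl; simp at hP)
    rcases hsub hxP with hxS | ⟨hxW, hxH⟩
    · exact .inl ((le_iff_mem_of_finrank_eq_one hP hxP hx).2 hxS)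
    · exact .inr ⟨(le_iff_mem_of_finrank_eq_one hP hxP hx).2 hxW, fun hPH => hxH (hPH hxP)⟩
  · rintro (hPS | ⟨hPW, hPH⟩) y hy
    · exact .inl (hPS hy)
    · by_cases hy0 : y = 0
      · exact .inl (hy0 ▸ S.zero_mem)
      · exact .inr ⟨hPW hy, fun hyH => hPH ((le_iff_mem_of_finrank_eq_one hP hy hy0).2 hyH)⟩

theorem inf_eq_bot_of_not_le {P U : Submodule K V} (hP : finrank K P = 1) (hPU : ¬ P ≤ U) :
    P ⊓ U = ⊥ :=
  (Submodule.eq_bot_iff _).2 fun _ hx => by_contra fun hx0 =>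
    hPU ((le_iff_mem_of_finrank_eq_one hP hx.1 hx0).2 hx.2)

theorem finrank_sup_of_not_le [FiniteDimensional K V] {P U : Submodule K V}
    (hP : finrank K P = 1) (hPU : ¬ P ≤ U) : finrank K ↥(U ⊔ P) = finrank K U + 1 := by
  have h := finrank_sup_add_finrank_inf_eq U P
  rw [inf_comm, inf_eq_bot_of_not_le hP hPU, finrank_bot, hP] at h
  omega

theorem sup_inf_eq_of_not_le {M P H : Submodule K V} (hMH : M ≤ H) (hP : finrank K P = 1)
    (hPH : ¬ P ≤ H) : (M ⊔ P) ⊓ H = M := by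
  rw [sup_inf_assoc_of_le _ hMH, inf_eq_bot_of_not_le hP hPH, sup_bot_eq]

theorem finrank_inf_add_one_of_not_le [FiniteDimensional K V] {H W : Submodule K V}
    (hH : finrank K H + 1 = finrank K V) (hW : ¬ W ≤ H) :
    finrank K ↥(W ⊓ H) + 1 = finrank K W := by
  have hsup : W ⊔ H = ⊤ := by
    have hlt : H < W ⊔ H := lt_of_le_of_ne le_sup_right fun h => hW (le_sup_left.trans h.ge)
    have := finrank_lt_finrank_of_lt hlt
    exact eq_top_of_finrank_eq (le_antisymm (finrank_le _) (by omega))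
  have h := finrank_sup_add_finrank_inf_eq W H
  rw [hsup, finrank_top] at h
  omega

theorem finrank_sup_eq_two [FiniteDimensional K V] {P₁ P₂ : Submodule K V} (hP₁ : finrank K P₁ = 1)
    (hP₂ : finrank K P₂ = 1) (hne : P₁ ≠ P₂) : finrank K ↥(P₁ ⊔ P₂) = 2 := by
  have : ¬ P₂ ≤ P₁ := fun h => hne (eq_of_le_of_finrank_eq h (by rw [hP₁, hP₂])).symm
  rw [finrank_sup_of_not_le hP₂ this, hP₁]

theorem inf_eq_iff_le_of_not_le [FiniteDimensional K V] {H W M : Submodule K V}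
    (hH : finrank K H + 1 = finrank K V) (hW : ¬ W ≤ H) (hMH : M ≤ H)
    (hMW : finrank K M + 1 = finrank K W) : W ⊓ H = M ↔ M ≤ W := by
  refine ⟨fun h => h ▸ inf_le_left, fun h => (eq_of_le_of_finrank_eq (le_inf h hMH) ?_).symm⟩
  have := finrank_inf_add_one_of_not_le hH hW
  omega

theorem inf_sup_eq_of_not_le [FiniteDimensional K V] {H W P : Submodule K V}
    (hH : finrank K H + 1 = finrank K V) (hP : finrank K P = 1) (hPW : P ≤ W) (hPH : ¬ P ≤ H) :
    W ⊓ H ⊔ P = W := by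
  refine eq_of_le_of_finrank_eq (sup_le inf_le_left hPW) ?_
  rw [finrank_sup_of_not_le hP fun h => hPH (h.trans inf_le_right),
    finrank_inf_add_one_of_not_le hH fun h => hPH (hPW.trans h)]

theorem le_of_sdiff_subset {H W₁ W₂ : Submodule K V} (hW₁ : ¬ W₁ ≤ H)
    (h : (W₁ : Set V) \ H ⊆ W₂) : W₁ ≤ W₂ := by
  obtain ⟨w, hw, hwH⟩ := SetLike.not_le_iff_exists.1 hW₁
  intro x hx
  by_cases hxH : x ∈ H
  · -- `x + w` lies off `H`, and `x = (x + w) - w`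
    have hxw : x + w ∈ W₂ := h ⟨add_mem hx hw, fun hc => hwH (by simpa using H.sub_mem hc hxH)⟩
    simpa using W₂.sub_mem hxw (h ⟨hw, hwH⟩)
  · exact h ⟨hx, hxH⟩

end Submodule

end LinearAlgebra

section SubspaceCount

open Finset

variable {K V : Type*} [Field K] [Fintype K] [AddCommGroup V] [Module K V] [FiniteDimensional K V]

local notation "q" => Fintype.card K

instance : Finite (Submodule K V) :=
  have : Finite V := Module.finite_of_finite K
  Finite.of_injective _ SetLike.coe_injective

theorem ncard_linearIndependent_span_eq {k : ℕ} {W : Submodule K V} (hW : finrank K W = k) :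
    {s : Fin k → V | LinearIndependent K s ∧ Submodule.span K (Set.range s) = W}.ncard
      = ∏ i ∈ range k, (q ^ k - q ^ i) := by
  let e : {s : Fin k → V | LinearIndependent K s ∧ Submodule.span K (Set.range s) = W}
      ≃ {t : Fin k → W // LinearIndependent K t} :=
    { toFun s := ⟨fun i => ⟨s.1 i, s.2.2.le (Submodule.subset_span (Set.mem_range_self i))⟩,
        LinearIndependent.of_comp W.subtype s.2.1⟩
      invFun t := ⟨W.subtype ∘ t.1, t.2.map' W.subtype W.ker_subtype, by
        rw [Set.range_comp, ← Submodule.map_span, t.2.span_eq_top_of_card_eq_finrank'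
          (by rw [Fintype.card_fin, hW]), Submodule.map_subtype_top]⟩
      left_inv _ := rfl
      right_inv _ := rfl }
  have : Finite W := Module.finite_of_finite K
  rw [← Nat.card_coe_set_eq, Nat.card_congr e, card_linearIndependent hW.ge, hW,
    Fin.prod_univ_eq_prod_range (fun i => q ^ k - q ^ i) k]

theorem ncard_finrank_eq_mul_prod (k : ℕ) (hk : k ≤ finrank K V) :
    {W : Submodule K V | finrank K W = k}.ncard * ∏ i ∈ range k, (q ^ k - q ^ i)
      = ∏ i ∈ range k, (q ^ finrank K V - q ^ i) := by
  have : Finite V := Module.finite_of_finite K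
  have hmaps : Set.MapsTo (fun s : Fin k → V => Submodule.span K (Set.range s))
      {s | LinearIndependent K s} {W | finrank K W = k} := fun s hs => by
    simp [finrank_span_eq_card hs]
  rw [← Set.ncard_eq_ncard_mul_of_fibers hmaps fun W hW => ncard_linearIndependent_span_eq hW,
    ← Nat.card_coe_set_eq, Set.coe_ofPred, card_linearIndependent hk,
    Fin.prod_univ_eq_prod_range (fun i => q ^ finrank K V - q ^ i) k]

theorem ncard_finrank_eq (k : ℕ) :
    {W : Submodule K V | finrank K W = k}.ncard = qBinom q (finrank K V) k := by
  rcases lt_or_ge (finrank K V) k with hk | hk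
  · rw [qBinom_eq_zero_of_lt hk, Set.ncard_eq_zero]
    ext W
    simpa using (Submodule.finrank_le W).trans_lt hk |>.ne
  have hq : 1 < q := Fintype.one_lt_card
  have hfamilies : (∏ i ∈ range k, (q ^ k - q ^ i)) = q ^ (∑ i ∈ range k, i) * qFact q k := by
    simpa using prod_pow_sub_pow_mul_qFact (le_refl k)
  have hcount := congrArg (· * qFact q (finrank K V - k)) (ncard_finrank_eq_mul_prod k hk)
  rw [hfamilies, prod_pow_sub_pow_mul_qFact hk, ← qBinom_mul_qFact_mul_qFact hq.le hk] at hcount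
  have hpos : 0 < q ^ (∑ i ∈ range k, i) * qFact q k * qFact q (finrank K V - k) :=
    Nat.mul_pos (Nat.mul_pos (pow_pos (by omega) _) (qFact_pos hq _)) (qFact_pos hq _)
  exact Nat.eq_of_mul_eq_mul_right hpos (by linarith)

theorem ncard_finrank_eq_of_le {L : Submodule K V} {k : ℕ} (hLk : finrank K L ≤ k) :
    {W : Submodule K V | finrank K W = k ∧ L ≤ W}.ncard
      = qBinom q (finrank K V - finrank K L) (k - finrank K L) := by
  have himage : {W : Submodule K V | finrank K W = k ∧ L ≤ W}
      = Submodule.comap L.mkQ '' {U | finrank K U = k - finrank K L} := by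
    ext W
    constructor
    · rintro ⟨hW, hLW⟩
      refine ⟨W.map L.mkQ, ?_, by rw [Submodule.comap_map_mkQ, sup_eq_right.2 hLW]⟩
      have := Submodule.finrank_comap_mkQ L (W.map L.mkQ)
      rw [Submodule.comap_map_mkQ, sup_eq_right.2 hLW, hW] at this
      simp only [Set.mem_ofPred_eq]
      omega
    · rintro ⟨U, hU, rfl⟩
      exact ⟨by rw [Submodule.finrank_comap_mkQ, hU.out]; omega, L.le_comap_mkQ U⟩
  rw [himage, Set.ncard_image_of_injective _
    (Submodule.comap_injective_of_surjective L.mkQ_surjective), ncard_finrank_eq,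
    ← Submodule.finrank_quotient_add_finrank L, Nat.add_sub_cancel]

theorem ncard_finrank_eq_of_le_of_le {L X : Submodule K V} (hLX : L ≤ X) {k : ℕ}
    (hLk : finrank K L ≤ k) :
    {W : Submodule K V | finrank K W = k ∧ L ≤ W ∧ W ≤ X}.ncard
      = qBinom q (finrank K X - finrank K L) (k - finrank K L) := by
  have hL : finrank K (L.comap X.subtype) = finrank K L := by
    rw [← Submodule.finrank_map_subtype_eq, Submodule.map_comap_subtype, inf_eq_right.2 hLX]
  have himage : {W : Submodule K V | finrank K W = k ∧ L ≤ W ∧ W ≤ X}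
      = Submodule.map X.subtype '' {W | finrank K W = k ∧ L.comap X.subtype ≤ W} := by
    ext W
    constructor
    · rintro ⟨hW, hLW, hWX⟩
      refine ⟨W.comap X.subtype, ⟨?_, Submodule.comap_mono hLW⟩, ?_⟩
      · rw [← Submodule.finrank_map_subtype_eq, Submodule.map_comap_subtype,
          inf_eq_right.2 hWX, hW]
      · rw [Submodule.map_comap_subtype, inf_eq_right.2 hWX]
    · rintro ⟨W, ⟨hW, hLW⟩, rfl⟩
      refine ⟨by rw [Submodule.finrank_map_subtype_eq, hW], ?_, Submodule.map_subtype_le _ _⟩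
      simpa [Submodule.map_comap_subtype, inf_eq_right.2 hLX]
        using Submodule.map_mono hLW (f := X.subtype)
  rw [himage, Set.ncard_image_of_injective _ (Submodule.map_injective_of_injective
    X.injective_subtype), ncard_finrank_eq_of_le (hL.symm ▸ hLk), hL]

theorem ncard_finrank_eq_le (S : Submodule K V) (k : ℕ) :
    {W : Submodule K V | finrank K W = k ∧ W ≤ S}.ncard = qBinom q (finrank K S) k := by
  simpa using ncard_finrank_eq_of_le_of_le (bot_le (a := S)) (k := k) (by simp)

theorem ncard_finrank_succ_not_le {M T S : Submodule K V} (hMT : M ≤ T) (hTS : T ≤ S)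
    (hT : finrank K T + 1 = finrank K S) :
    {W : Submodule K V | finrank K W = finrank K M + 1 ∧ M ≤ W ∧ W ≤ S ∧ ¬ W ≤ T}.ncard
      = q ^ (finrank K T - finrank K M) := by
  have hsdiff : {W : Submodule K V | finrank K W = finrank K M + 1 ∧ M ≤ W ∧ W ≤ S ∧ ¬ W ≤ T}
      = {W : Submodule K V | finrank K W = finrank K M + 1 ∧ M ≤ W ∧ W ≤ S}
        \ {W : Submodule K V | finrank K W = finrank K M + 1 ∧ M ≤ W ∧ W ≤ T} := by
    ext W
    simp only [Set.mem_sdiff, Set.mem_ofPred_eq]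
    tauto
  have hsub : {W : Submodule K V | finrank K W = finrank K M + 1 ∧ M ≤ W ∧ W ≤ T}
      ⊆ {W : Submodule K V | finrank K W = finrank K M + 1 ∧ M ≤ W ∧ W ≤ S} :=
    fun _ hW => ⟨hW.1, hW.2.1, hW.2.2.trans hTS⟩
  have hMT' := Submodule.finrank_mono hMT
  rw [hsdiff, Set.ncard_sdiff hsub,
    ncard_finrank_eq_of_le_of_le (hMT.trans hTS) (by omega),
    ncard_finrank_eq_of_le_of_le hMT (by omega), Nat.add_sub_cancel_left,
    show finrank K S - finrank K M = finrank K T - finrank K M + 1 by omega, qBinom_succ_one]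
  omega

theorem ncard_points_le_not_le {T S : Submodule K V} (hTS : T ≤ S)
    (hT : finrank K T + 1 = finrank K S) :
    {P : Submodule K V | finrank K P = 1 ∧ P ≤ S ∧ ¬ P ≤ T}.ncard = q ^ finrank K T := by
  simpa using ncard_finrank_succ_not_le (bot_le (a := T)) hTS hT

end SubspaceCount

section Polarity

variable {K V : Type*} [Field K] [AddCommGroup V] [Module K V]

structure IsPolarity (H : Submodule K V) (σ : Submodule K V → Submodule K V) : Prop where
  le : ∀ W ≤ H, σ W ≤ H
  involutive : ∀ W ≤ H, σ (σ W) = W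
  antitone : ∀ W₁ W₂ : Submodule K V, W₁ ≤ H → W₂ ≤ H → W₁ ≤ W₂ → σ W₂ ≤ σ W₁
  finrank_eq : ∀ W ≤ H, finrank K (σ W) = finrank K H - finrank K W

theorem IsPolarity.le_iff_le {H : Submodule K V} {σ : Submodule K V → Submodule K V}
    (hσ : IsPolarity H σ) {A B : Submodule K V} (hA : A ≤ H) (hB : B ≤ H) :
    A ≤ σ B ↔ B ≤ σ A :=
  ⟨fun h => hσ.involutive B hB ▸ hσ.antitone _ _ hA (hσ.le B hB) h,
    fun h => hσ.involutive A hA ▸ hσ.antitone _ _ hB (hσ.le A hA) h⟩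

variable {σ : Submodule K V → Submodule K V} {H W P : Submodule K V}

theorem projPts_coe (U : Submodule K V) :
    projPts K (U : Set V) = {P : Submodule K V | finrank K P = 1 ∧ P ≤ U} := by
  ext P
  simp [projPts]

theorem projPts_injective : Function.Injective fun U : Submodule K V => projPts K (U : Set V) := by
  have key : ∀ U₁ U₂ : Submodule K V, projPts K (U₁ : Set V) = projPts K U₂ → U₁ ≤ U₂ := by
    intro U₁ U₂ h x hx
    by_cases hx0 : x = 0
    · simp [hx0]
    have hspan : Submodule.span K {x} ∈ projPts K (U₁ : Set V) := by
      rw [projPts_coe]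
      exact ⟨finrank_span_singleton hx0, (Submodule.span_singleton_le_iff_mem _ _).2 hx⟩
    rw [h, projPts_coe] at hspan
    exact (Submodule.span_singleton_le_iff_mem _ _).1 hspan.2
  exact fun U₁ U₂ h => le_antisymm (key U₁ U₂ h) (key U₂ U₁ h.symm)

theorem mem_blockA_iff :
    P ∈ blockA σ H W ↔ finrank K P = 1 ∧ (P ≤ σ (W ⊓ H) ∨ P ≤ W ∧ ¬ P ≤ H) :=
  and_congr_right Submodule.coe_subset_union_sdiff_iff

theorem mem_blockA_iff_of_le (hP : P ≤ H) :
    P ∈ blockA σ H W ↔ finrank K P = 1 ∧ P ≤ σ (W ⊓ H) := by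
  simp [mem_blockA_iff, hP]

theorem mem_blockA_iff_of_not_le (hσH : σ (W ⊓ H) ≤ H) (hP : ¬ P ≤ H) :
    P ∈ blockA σ H W ↔ finrank K P = 1 ∧ P ≤ W := by
  have : ¬ P ≤ σ (W ⊓ H) := fun h => hP (h.trans hσH)
  simp [mem_blockA_iff, this, hP]

theorem blockA_eq_union :
    blockA σ H W = {P : Submodule K V | finrank K P = 1 ∧ P ≤ σ (W ⊓ H)}
      ∪ {P : Submodule K V | finrank K P = 1 ∧ P ≤ W ∧ ¬ P ≤ W ⊓ H} := by
  ext P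
  simp only [mem_blockA_iff, Set.mem_union, Set.mem_ofPred_eq, le_inf_iff]
  tauto

theorem span_singleton_mem_blockA_iff (hσH : σ (W ⊓ H) ≤ H) {x : V} (hx : x ∉ H) :
    Submodule.span K {x} ∈ blockA σ H W ↔ x ∈ W := by
  have hx0 : x ≠ 0 := fun h => hx (h ▸ H.zero_mem)
  rw [mem_blockA_iff_of_not_le hσH (by rwa [Submodule.span_singleton_le_iff_mem]),
    finrank_span_singleton hx0, Submodule.span_singleton_le_iff_mem]
  simp

theorem blockA_injOn (hσle : ∀ W ≤ H, σ W ≤ H) : Set.InjOn (blockA σ H) {W | ¬ W ≤ H} := by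
  have key : ∀ W₁ W₂ : Submodule K V, ¬ W₁ ≤ H → blockA σ H W₁ = blockA σ H W₂ → W₁ ≤ W₂ :=
    fun W₁ W₂ hW₁ h => Submodule.le_of_sdiff_subset hW₁ fun x ⟨hxW, hxH⟩ =>
      (span_singleton_mem_blockA_iff (hσle _ inf_le_right) hxH).1
        (h ▸ (span_singleton_mem_blockA_iff (hσle _ inf_le_right) hxH).2 hxW)
  exact fun W₁ hW₁ W₂ hW₂ h => le_antisymm (key W₁ W₂ hW₁ h) (key W₂ W₁ hW₂ h.symm)

theorem blockA_ne_projPts {U : Submodule K V} (hW : ¬ W ≤ H) (hU : U ≤ H) :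
    blockA σ H W ≠ projPts K (U : Set V) := by
  obtain ⟨w, hwW, hwH⟩ := SetLike.not_le_iff_exists.1 hW
  have hw0 : w ≠ 0 := fun h => hwH (h ▸ H.zero_mem)
  intro h
  have hmem : Submodule.span K {w} ∈ blockA σ H W := mem_blockA_iff.2
    ⟨finrank_span_singleton hw0, .inr ⟨(Submodule.span_singleton_le_iff_mem w W).2 hwW,
      by rwa [Submodule.span_singleton_le_iff_mem]⟩⟩
  rw [h, projPts_coe] at hmem
  exact hwH (hU (hmem.2 (Submodule.mem_span_singleton_self w)))

theorem finrank_inf_of_mem_setA [FiniteDimensional K V] {e : ℕ} (hV : finrank K V = 2 * e + 1)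
    (hH : finrank K H = 2 * e) (hW : W ∈ setA e H) : finrank K ↥(W ⊓ H) = e := by
  have := Submodule.finrank_inf_add_one_of_not_le (by omega : finrank K H + 1 = finrank K V) hW.2
  rw [hW.1] at this
  omega

end Polarity

section Design

variable {K V : Type*} [Field K] [Fintype K] [AddCommGroup V] [Module K V]
  [FiniteDimensional K V] {e : ℕ} {H : Submodule K V} {σ : Submodule K V → Submodule K V}

local notation "q" => Fintype.card K

theorem ncard_blockA (hV : finrank K V = 2 * e + 1) (hH : finrank K H = 2 * e)
    (hσ : IsPolarity H σ) {W : Submodule K V} (hW : W ∈ setA e H) :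
    (blockA σ H W).ncard = qBinom q (e + 1) 1 := by
  have hWH := finrank_inf_of_mem_setA hV hH hW
  have hdisj : Disjoint {P : Submodule K V | finrank K P = 1 ∧ P ≤ σ (W ⊓ H)}
      {P : Submodule K V | finrank K P = 1 ∧ P ≤ W ∧ ¬ P ≤ W ⊓ H} :=
    Set.disjoint_left.2 fun P h₁ h₂ =>
      h₂.2.2 (le_inf h₂.2.1 (h₁.2.trans (hσ.le _ inf_le_right)))
  rw [blockA_eq_union, Set.ncard_union_eq hdisj, ncard_finrank_eq_le,
    ncard_points_le_not_le inf_le_left (by rw [hWH, hW.1]), hσ.finrank_eq _ inf_le_right,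
    hWH, hH, show 2 * e - e = e by omega, qBinom_succ_one]

theorem ncard_of_mem_blocksJT (hV : finrank K V = 2 * e + 1) (hH : finrank K H = 2 * e)
    (hσ : IsPolarity H σ) {B : Set (Submodule K V)} (hB : B ∈ blocksJT e σ H) :
    B.ncard = qBinom q (e + 1) 1 := by
  rcases hB with ⟨W, hW, rfl⟩ | ⟨U, hU, -, rfl⟩
  · exact ncard_blockA hV hH hσ hW
  · rw [projPts_coe, ncard_finrank_eq_le, hU]

theorem ncard_blocksJT_pair_eq_add (hσle : ∀ W ≤ H, σ W ≤ H) {P₁ P₂ : Submodule K V}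
    (hP₁ : finrank K P₁ = 1) (hP₂ : finrank K P₂ = 1) :
    {B ∈ blocksJT e σ H | P₁ ∈ B ∧ P₂ ∈ B}.ncard
      = {W ∈ setA e H | P₁ ∈ blockA σ H W ∧ P₂ ∈ blockA σ H W}.ncard
        + {U : Submodule K V | finrank K U = e + 1 ∧ U ≤ H ∧ P₁ ≤ U ∧ P₂ ≤ U}.ncard := by
  have hsplit : {B ∈ blocksJT e σ H | P₁ ∈ B ∧ P₂ ∈ B}
      = blockA σ H '' {W ∈ setA e H | P₁ ∈ blockA σ H W ∧ P₂ ∈ blockA σ H W}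
        ∪ (fun U : Submodule K V => projPts K (U : Set V)) ''
          {U : Submodule K V | finrank K U = e + 1 ∧ U ≤ H ∧ P₁ ≤ U ∧ P₂ ≤ U} := by
    ext B
    simp only [blocksJT, Set.mem_union, Set.mem_image, Set.mem_ofPred_eq]
    constructor
    · rintro ⟨⟨W, hW, rfl⟩ | ⟨U, hU, hUH, rfl⟩, h₁, h₂⟩
      · exact .inl ⟨W, ⟨hW, h₁, h₂⟩, rfl⟩
      · rw [projPts_coe] at h₁ h₂
        exact .inr ⟨U, ⟨hU, hUH, h₁.2, h₂.2⟩, rfl⟩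
    · rintro (⟨W, ⟨hW, h₁, h₂⟩, rfl⟩ | ⟨U, ⟨hU, hUH, h₁, h₂⟩, rfl⟩)
      · exact ⟨.inl ⟨W, hW, rfl⟩, h₁, h₂⟩
      · rw [projPts_coe]
        exact ⟨.inr ⟨U, hU, hUH, projPts_coe U⟩, ⟨hP₁, h₁⟩, ⟨hP₂, h₂⟩⟩
  have hdisj : Disjoint (blockA σ H '' {W ∈ setA e H | P₁ ∈ blockA σ H W ∧ P₂ ∈ blockA σ H W})
      ((fun U : Submodule K V => projPts K (U : Set V)) ''
        {U : Submodule K V | finrank K U = e + 1 ∧ U ≤ H ∧ P₁ ≤ U ∧ P₂ ≤ U}) := by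
    refine Set.disjoint_left.2 ?_
    rintro _ ⟨W, hW, rfl⟩ ⟨U, hU, h⟩
    exact blockA_ne_projPts hW.1.2 hU.2.1 h.symm
  rw [hsplit, Set.ncard_union_eq hdisj,
    ((blockA_injOn hσle).mono fun W hW => hW.1.2).ncard_image,
    Set.ncard_image_of_injective _ projPts_injective]

theorem ncard_blocksJT_pair_of_not_le (hV : finrank K V = 2 * e + 1) (hσle : ∀ W ≤ H, σ W ≤ H)
    (he : 1 ≤ e) {P₁ P₂ : Submodule K V} (hP₁ : finrank K P₁ = 1) (hP₂ : finrank K P₂ = 1)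
    (hne : P₁ ≠ P₂) (h₁ : ¬ P₁ ≤ H) (h₂ : ¬ P₂ ≤ H) :
    {B ∈ blocksJT e σ H | P₁ ∈ B ∧ P₂ ∈ B}.ncard = qBinom q (2 * e - 1) (e - 1) := by
  have hA : {W ∈ setA e H | P₁ ∈ blockA σ H W ∧ P₂ ∈ blockA σ H W}
      = {W : Submodule K V | finrank K W = e + 1 ∧ P₁ ⊔ P₂ ≤ W} := by
    ext W
    simp only [setA, Set.mem_ofPred_eq, sup_le_iff,
      mem_blockA_iff_of_not_le (hσle _ inf_le_right) h₁,
      mem_blockA_iff_of_not_le (hσle _ inf_le_right) h₂, hP₁, hP₂, true_and]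
    exact ⟨fun ⟨⟨hW, _⟩, hPW⟩ => ⟨hW, hPW⟩,
      fun ⟨hW, hPW⟩ => ⟨⟨hW, fun hWH => h₁ (hPW.1.trans hWH)⟩, hPW⟩⟩
  have hB : {U : Submodule K V | finrank K U = e + 1 ∧ U ≤ H ∧ P₁ ≤ U ∧ P₂ ≤ U} = ∅ :=
    Set.eq_empty_of_forall_notMem fun U hU => h₁ (hU.2.2.1.trans hU.2.1)
  have hL := Submodule.finrank_sup_eq_two hP₁ hP₂ hne
  rw [ncard_blocksJT_pair_eq_add hσle hP₁ hP₂, hA, hB, Set.ncard_empty, add_zero,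
    ncard_finrank_eq_of_le (by omega), hL, hV]
  congr 1

theorem ncard_setA_inf_eq (hV : finrank K V = 2 * e + 1) (hH : finrank K H = 2 * e)
    {M : Submodule K V} (hMH : M ≤ H) (hM : finrank K M = e) :
    {W ∈ setA e H | W ⊓ H = M}.ncard = q ^ e := by
  have hfiber : {W ∈ setA e H | W ⊓ H = M}
      = {W : Submodule K V | finrank K W = finrank K M + 1 ∧ M ≤ W ∧ W ≤ ⊤ ∧ ¬ W ≤ H} := by
    ext W
    simp only [setA, Set.mem_ofPred_eq, le_top, true_and]
    constructor
    · rintro ⟨⟨hW, hWH⟩, rfl⟩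
      exact ⟨by rw [hW, finrank_inf_of_mem_setA hV hH ⟨hW, hWH⟩], inf_le_left, hWH⟩
    · rintro ⟨hW, hMW, hWH⟩
      exact ⟨⟨by omega, hWH⟩,
        (Submodule.inf_eq_iff_le_of_not_le (by omega) hWH hMH hW.symm).2 hMW⟩
  rw [hfiber, ncard_finrank_succ_not_le hMH le_top (by rw [finrank_top]; omega), hH, hM,
    show 2 * e - e = e by omega]

theorem ncard_blocksJT_pair_of_le_of_not_le (hV : finrank K V = 2 * e + 1)
    (hH : finrank K H = 2 * e) (hσ : IsPolarity H σ) (he : 1 ≤ e) {P₁ P₂ : Submodule K V}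
    (hP₁ : finrank K P₁ = 1) (hP₂ : finrank K P₂ = 1) (h₁ : P₁ ≤ H) (h₂ : ¬ P₂ ≤ H) :
    {B ∈ blocksJT e σ H | P₁ ∈ B ∧ P₂ ∈ B}.ncard = qBinom q (2 * e - 1) (e - 1) := by
  set A := {W ∈ setA e H | P₁ ∈ blockA σ H W ∧ P₂ ∈ blockA σ H W}
  have hmemA : ∀ W, W ∈ A ↔ W ∈ setA e H ∧ W ⊓ H ≤ σ P₁ ∧ P₂ ≤ W := by
    intro W
    simp only [A, Set.mem_sep_iff, mem_blockA_iff_of_le h₁,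
      mem_blockA_iff_of_not_le (hσ.le _ inf_le_right) h₂, hσ.le_iff_le h₁ inf_le_right, hP₁,
      hP₂, true_and]
  have hmaps : Set.MapsTo (· ⊓ H) A {M : Submodule K V | finrank K M = e ∧ M ≤ σ P₁} :=
    fun W hW => ⟨finrank_inf_of_mem_setA hV hH ((hmemA W).1 hW).1, ((hmemA W).1 hW).2.1⟩
  have hfib : ∀ M ∈ {M : Submodule K V | finrank K M = e ∧ M ≤ σ P₁},
      {W ∈ A | W ⊓ H = M}.ncard = 1 := by
    rintro M ⟨hM, hMσ⟩
    have hMH : M ≤ H := hMσ.trans (hσ.le _ h₁)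
    have hinf := Submodule.sup_inf_eq_of_not_le hMH hP₂ h₂
    have hmem : M ⊔ P₂ ∈ A := (hmemA _).2 ⟨⟨by
      rw [Submodule.finrank_sup_of_not_le hP₂ fun h => h₂ (h.trans hMH), hM],
      fun h => h₂ (le_sup_right.trans h)⟩, hinf.le.trans hMσ, le_sup_right⟩
    refine Set.ncard_eq_one.2 ⟨M ⊔ P₂, Set.ext fun W => ⟨?_, ?_⟩⟩
    · rintro ⟨hWA, rfl⟩
      obtain ⟨⟨hW, hWH⟩, -, hPW⟩ := (hmemA W).1 hWA
      exact (Submodule.inf_sup_eq_of_not_le (by omega) hP₂ hPW h₂).symm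
    · rintro rfl
      exact ⟨hmem, hinf⟩
  have hB : {U : Submodule K V | finrank K U = e + 1 ∧ U ≤ H ∧ P₁ ≤ U ∧ P₂ ≤ U} = ∅ :=
    Set.eq_empty_of_forall_notMem fun U hU => h₂ (hU.2.2.2.trans hU.2.1)
  rw [ncard_blocksJT_pair_eq_add hσ.le hP₁ hP₂, hB, Set.ncard_empty, add_zero,
    Set.ncard_eq_ncard_mul_of_fibers hmaps hfib, mul_one, ncard_finrank_eq_le,
    hσ.finrank_eq _ h₁, hH, hP₁, ← qBinom_symm Fintype.one_lt_card (by omega : e ≤ 2 * e - 1)]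
  congr 1
  omega

theorem ncard_blocksJT_pair_of_le (hV : finrank K V = 2 * e + 1) (hH : finrank K H = 2 * e)
    (hσ : IsPolarity H σ) (he : 1 ≤ e) {P₁ P₂ : Submodule K V} (hP₁ : finrank K P₁ = 1)
    (hP₂ : finrank K P₂ = 1) (hne : P₁ ≠ P₂) (h₁ : P₁ ≤ H) (h₂ : P₂ ≤ H) :
    {B ∈ blocksJT e σ H | P₁ ∈ B ∧ P₂ ∈ B}.ncard = qBinom q (2 * e - 1) (e - 1) := by
  have hLH : P₁ ⊔ P₂ ≤ H := sup_le h₁ h₂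
  have hL := Submodule.finrank_sup_eq_two hP₁ hP₂ hne
  set A := {W ∈ setA e H | P₁ ∈ blockA σ H W ∧ P₂ ∈ blockA σ H W}
  have hmemA : ∀ W, W ∈ A ↔ W ∈ setA e H ∧ W ⊓ H ≤ σ (P₁ ⊔ P₂) := by
    intro W
    rw [← hσ.le_iff_le hLH inf_le_right, sup_le_iff]
    simp only [A, Set.mem_sep_iff, mem_blockA_iff_of_le h₁, mem_blockA_iff_of_le h₂, hP₁, hP₂,
      true_and]
  have hmaps : Set.MapsTo (· ⊓ H) A {M : Submodule K V | finrank K M = e ∧ M ≤ σ (P₁ ⊔ P₂)} :=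
    fun W hW => ⟨finrank_inf_of_mem_setA hV hH ((hmemA W).1 hW).1, ((hmemA W).1 hW).2⟩
  have hfib : ∀ M ∈ {M : Submodule K V | finrank K M = e ∧ M ≤ σ (P₁ ⊔ P₂)},
      {W ∈ A | W ⊓ H = M}.ncard = q ^ e := by
    rintro M ⟨hM, hMσ⟩
    rw [← ncard_setA_inf_eq hV hH (hMσ.trans (hσ.le _ hLH)) hM]
    congr 1
    ext W
    simp only [Set.mem_sep_iff, hmemA]
    exact ⟨fun ⟨⟨hW, _⟩, hWM⟩ => ⟨hW, hWM⟩, fun ⟨hW, hWM⟩ => ⟨⟨hW, hWM ▸ hMσ⟩, hWM⟩⟩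
  have hB : {U : Submodule K V | finrank K U = e + 1 ∧ U ≤ H ∧ P₁ ≤ U ∧ P₂ ≤ U}
      = {U : Submodule K V | finrank K U = e + 1 ∧ P₁ ⊔ P₂ ≤ U ∧ U ≤ H} := by
    ext U
    simp only [Set.mem_ofPred_eq, sup_le_iff]
    tauto
  rw [ncard_blocksJT_pair_eq_add hσ.le hP₁ hP₂, Set.ncard_eq_ncard_mul_of_fibers hmaps hfib, hB,
    ncard_finrank_eq_le, ncard_finrank_eq_of_le_of_le hLH (by omega), hσ.finrank_eq _ hLH, hH,
    hL]
  obtain ⟨n, rfl⟩ : ∃ n, e = n + 1 := ⟨e - 1, by omega⟩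
  rw [show 2 * (n + 1) - 2 = 2 * n by omega, show n + 1 + 1 - 2 = n by omega,
    show 2 * (n + 1) - 1 = 2 * n + 1 by omega, Nat.add_sub_cancel,
    ← qBinom_symm Fintype.one_lt_card (by omega : n ≤ 2 * n + 1),
    show 2 * n + 1 - n = n + 1 by omega, qBinom_succ_succ]
  ring

theorem ncard_blocksJT_pair (hV : finrank K V = 2 * e + 1) (hH : finrank K H = 2 * e)
    (hσ : IsPolarity H σ) (he : 1 ≤ e) {P₁ P₂ : Submodule K V} (hP₁ : finrank K P₁ = 1)
    (hP₂ : finrank K P₂ = 1) (hne : P₁ ≠ P₂) :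
    {B ∈ blocksJT e σ H | P₁ ∈ B ∧ P₂ ∈ B}.ncard = qBinom q (2 * e - 1) (e - 1) := by
  by_cases h₁ : P₁ ≤ H <;> by_cases h₂ : P₂ ≤ H
  · exact ncard_blocksJT_pair_of_le hV hH hσ he hP₁ hP₂ hne h₁ h₂
  · exact ncard_blocksJT_pair_of_le_of_not_le hV hH hσ he hP₁ hP₂ h₁ h₂
  · simp_rw [and_comm (a := P₁ ∈ _)]
    exact ncard_blocksJT_pair_of_le_of_not_le hV hH hσ he hP₂ hP₁ h₂ h₁
  · exact ncard_blocksJT_pair_of_not_le hV hσ.le he hP₁ hP₂ hne h₁ h₂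

end Design

theorem stmt14_general (q e : ℕ) (he : 2 ≤ e)
    (K V : Type*) [Field K] [Fintype K] (hK : Fintype.card K = q)
    [AddCommGroup V] [Module K V]
    (hV : Module.finrank K V = 2 * e + 1)
    (H : Submodule K V) (hH : Module.finrank K ↥H = 2 * e)
    (σ : Submodule K V → Submodule K V)
    (hσle : ∀ W ≤ H, σ W ≤ H)
    (hσinv : ∀ W ≤ H, σ (σ W) = W)
    (hσanti : ∀ W₁ W₂ : Submodule K V, W₁ ≤ H → W₂ ≤ H → W₁ ≤ W₂ → σ W₂ ≤ σ W₁)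
    (hσrank : ∀ W ≤ H, Module.finrank K ↥(σ W) = 2 * e - Module.finrank K ↥W)
    :
    {P : Submodule K V | Module.finrank K P = 1}.ncard = (q ^ (2 * e + 1) - 1) / (q - 1) ∧
    (∀ B ∈ blocksJT e σ H, B.ncard = (q ^ (e + 1) - 1) / (q - 1)) ∧
    (∀ P₁ P₂ : Submodule K V, Module.finrank K P₁ = 1 → Module.finrank K P₂ = 1 → P₁ ≠ P₂ →
      {B ∈ blocksJT e σ H | P₁ ∈ B ∧ P₂ ∈ B}.ncard =
        (∏ i ∈ Finset.Icc (e + 1) (2 * e - 1), (q ^ i - 1)) /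
          ∏ i ∈ Finset.Icc 1 (e - 1), (q ^ i - 1)) := by
  subst hK
  have : FiniteDimensional K V := Module.finite_of_finrank_pos (by omega)
  have hσ : IsPolarity H σ := ⟨hσle, hσinv, hσanti, fun W hW => by rw [hσrank W hW, hH]⟩
  have hq : 2 ≤ Fintype.card K := Fintype.one_lt_card
  refine ⟨?_, fun B hB => ?_, fun P₁ P₂ hP₁ hP₂ hne => ?_⟩
  · rw [ncard_finrank_eq, hV, qBinom_one hq]
  · rw [ncard_of_mem_blocksJT hV hH hσ hB, qBinom_one hq]
  · rw [ncard_blocksJT_pair hV hH hσ (by omega) hP₁ hP₂ hne, qBinom_eq_prod_div hq (by omega)]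
    congr 3
    omega

/-- The incidence structure `([V], 𝒜' ∪ ℬ')` is a 2-(v, k, λ) design with
`v = (q^{2e+1} - 1)/(q - 1)`, `k = (q^{e+1} - 1)/(q - 1)` and
`λ = (q^{2e-1} - 1) ⋯ (q^{e+1} - 1) / ((q^{e-1} - 1) ⋯ (q - 1))`: the point set has `v`
elements, every block has exactly `k` points, and every pair of distinct points is contained
in exactly `λ` blocks. -/
theorem stmt14 (q e : ℕ) (hq : ∃ p n : ℕ, p.Prime ∧ 0 < n ∧ q = p ^ n) (he : 2 ≤ e)
    (K V : Type*) [Field K] [Fintype K] (hK : Fintype.card K = q)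
    [AddCommGroup V] [Module K V] [FiniteDimensional K V]
    (hV : Module.finrank K V = 2 * e + 1)
    (H : Submodule K V) (hH : Module.finrank K ↥H = 2 * e)
    (σ : Submodule K V → Submodule K V)
    (hσle : ∀ W ≤ H, σ W ≤ H)
    (hσinv : ∀ W ≤ H, σ (σ W) = W)
    (hσanti : ∀ W₁ W₂ : Submodule K V, W₁ ≤ H → W₂ ≤ H → W₁ ≤ W₂ → σ W₂ ≤ σ W₁)
    (hσinf : ∀ W₁ W₂ : Submodule K V, W₁ ≤ H → W₂ ≤ H → σ W₁ ⊓ σ W₂ = σ (W₁ ⊔ W₂))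
    (hσrank : ∀ W ≤ H, Module.finrank K ↥(σ W) = 2 * e - Module.finrank K ↥W)
    :
    {P : Submodule K V | Module.finrank K P = 1}.ncard = (q ^ (2 * e + 1) - 1) / (q - 1) ∧
    (∀ B ∈ blocksJT e σ H, B.ncard = (q ^ (e + 1) - 1) / (q - 1)) ∧
    (∀ P₁ P₂ : Submodule K V, Module.finrank K P₁ = 1 → Module.finrank K P₂ = 1 → P₁ ≠ P₂ →
      {B ∈ blocksJT e σ H | P₁ ∈ B ∧ P₂ ∈ B}.ncard =
        (∏ i ∈ Finset.Icc (e + 1) (2 * e - 1), (q ^ i - 1)) /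
          ∏ i ∈ Finset.Icc 1 (e - 1), (q ^ i - 1)) :=
  stmt14_general q e he K V hK hV H hH σ hσle hσinv hσanti hσrank
end

section
/- Let H be a vector space of finite dimension n over a field, and let σ be an inclusion-reversing permutation of the set of all subspaces of H with σ² the identity. Then for every subspace W of H, dim σ(W) = n − dim W. -/
open Module

section aux

variable {K H : Type*} [Field K] [AddCommGroup H] [Module K H] [FiniteDimensional K H]

/-- A cover relation in the submodule lattice raises `finrank` by exactly one. -/
lemma covBy_finrank {U W : Submodule K H} (h : U ⋖ W) :
    Module.finrank K ↥W = Module.finrank K ↥U + 1 := by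
  obtain ⟨x, hxW, hxU⟩ := SetLike.exists_of_lt h.lt
  have hspan : (K ∙ x) ⊔ U = W := by
    have hle : (K ∙ x) ⊔ U ≤ W :=
      sup_le (Submodule.span_le.2 (by simpa using hxW)) h.lt.le
    rcases hle.lt_or_eq with hlt | heq
    · exact absurd hlt (h.2 (Submodule.covBy_span_singleton_sup hxU).lt)
    · exact heq
  have hinf : (K ∙ x) ⊓ U = ⊥ := by
    rw [eq_bot_iff]
    rintro y ⟨hy1, hy2⟩
    obtain ⟨r, rfl⟩ := Submodule.mem_span_singleton.1 hy1
    rcases eq_or_ne r 0 with rfl | hr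
    · simp
    · exact absurd ((Submodule.smul_mem_iff _ hr).1 hy2) hxU
  have hx0 : x ≠ 0 := fun hx => hxU (hx ▸ U.zero_mem)
  have := Submodule.finrank_sup_add_finrank_inf_eq (K ∙ x) U
  rw [hspan, hinf, finrank_bot, finrank_span_singleton hx0] at this
  omega

/-- Every nonzero finite-dimensional subspace covers some subspace. -/
lemma exists_covBy {W : Submodule K H} (h : W ≠ ⊥) : ∃ U, U ⋖ W := by
  classical
  set P : ℕ → Prop := fun m => ∃ U : Submodule K H, U < W ∧ Module.finrank K ↥U = m with hP
  have hP0 : P 0 := ⟨⊥, bot_lt_iff_ne_bot.2 h, finrank_bot K H⟩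
  set m := Nat.findGreatest P (finrank K H) with hm
  obtain ⟨U, hUW, hUm⟩ : P m :=
    Nat.findGreatest_spec (Nat.zero_le _) hP0
  refine ⟨U, hUW, fun V hUV hVW => ?_⟩
  have hPV : P (Module.finrank K ↥V) := ⟨V, hVW, rfl⟩
  have hlt : m < Module.finrank K ↥V := hUm ▸ Submodule.finrank_lt_finrank_of_lt hUV
  exact Nat.findGreatest_is_greatest hlt (Submodule.finrank_le V) hPV

end aux

/-- If `H` is an `n`-dimensional vector space and `σ` is an
inclusion-reversing permutation of the set of all subspaces of `H` with `σ²` the identity,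
then `dim σ(W) = n - dim W` for every subspace `W` of `H`. -/
theorem stmt17 (K H : Type*) [Field K] [AddCommGroup H] [Module K H] [FiniteDimensional K H]
    (n : ℕ) (hn : Module.finrank K H = n)
    (σ : Submodule K H → Submodule K H)
    (hσinv : ∀ W : Submodule K H, σ (σ W) = W)
    (hσanti : ∀ W₁ W₂ : Submodule K H, W₁ ≤ W₂ → σ W₂ ≤ σ W₁)
    (W : Submodule K H) :
    Module.finrank K ↥(σ W) = n - Module.finrank K ↥W := by
  have hinj : Function.Injective σ := fun a b hab => by
    rw [← hσinv a, hab, hσinv]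
  have hbot : σ ⊥ = ⊤ := by
    rw [eq_top_iff, ← hσinv ⊤]
    exact hσanti _ _ bot_le
  have hstrict : ∀ a b : Submodule K H, a < b → σ b < σ a := fun a b hab =>
    lt_of_le_of_ne (hσanti _ _ hab.le) (fun he => hab.ne ((hinj he).symm))
  have hcov : ∀ a b : Submodule K H, a ⋖ b → σ b ⋖ σ a := by
    intro a b hab
    refine ⟨hstrict _ _ hab.lt, fun V h1 h2 => ?_⟩
    have h1' : a < σ V := by
      have := hstrict _ _ h2; rwa [hσinv] at this
    have h2' : σ V < b := by
      have := hstrict _ _ h1; rwa [hσinv] at this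
    exact hab.2 h1' h2'
  -- induction on the finrank of W
  suffices h : ∀ k : ℕ, ∀ W : Submodule K H, Module.finrank K ↥W = k →
      Module.finrank K ↥(σ W) = n - k by
    exact h _ W rfl
  intro k
  induction k with
  | zero =>
    intro W hW
    rw [Submodule.finrank_eq_zero.1 hW, hbot, Nat.sub_zero, ← hn]
    exact finrank_top K H
  | succ k ih =>
    intro W hW
    have hWne : W ≠ ⊥ := by
      intro h; rw [h, finrank_bot] at hW; omega
    obtain ⟨U, hUW⟩ := exists_covBy hWne
    have hU : Module.finrank K ↥U = k := by
      have := covBy_finrank hUW; omega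
    have hσU : Module.finrank K ↥(σ U) = n - k := ih U hU
    have hσcov : σ W ⋖ σ U := hcov _ _ hUW
    have h1 : Module.finrank K ↥(σ U) = Module.finrank K ↥(σ W) + 1 := covBy_finrank hσcov
    have hkn : k + 1 ≤ n := by
      rw [← hW, ← hn]; exact Submodule.finrank_le W
    omega
end
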